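/- (Rounding lemma.) Let φ be a 3-CNF formula with m clauses over n variables and f_φ its associated ReLU network. For x ∈ [0,1]^n define the rounded vector x' ∈ {0,1}^n by x'_k = 1 if x_k ≥ 1/2 and x'_k = 0 otherwise. Then f_φ(x') ≥ f_φ(x). -/
import Mathlib


/-- The ReLU function `σ(t) = max(t, 0)`. -/
def relu (t : ℝ) : ℝ := max t 0

/-- A literal over `n` Boolean variables: a variable index together with a
negation flag (`neg = true` means the literal is `¬ s_var`). -/
structure Literal (n : ℕ) where
  var : Fin n
  neg : Bool

/-- A 3-CNF formula with `m` clauses over `n` variables: each clause consists of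
three literals. -/
def CNF3 (n m : ℕ) := Fin m → Fin 3 → Literal n

/-- A literal is satisfied by an assignment `s`. -/
def litSat {n : ℕ} (s : Fin n → Prop) (t : Literal n) : Prop :=
  if t.neg then ¬ s t.var else s t.var

/-- A clause (three literals) is satisfied by an assignment `s` if some literal
in it is satisfied. -/
def clauseSat {n : ℕ} (s : Fin n → Prop) (C : Fin 3 → Literal n) : Prop :=
  ∃ j, litSat s (C j)

/-- The value `z_{i,j}(x)`: `σ(2 x_k − 1)` for the literal `s_k` and
`σ(1 − 2 x_k)` for the literal `¬ s_k`. -/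
def zval {n : ℕ} (t : Literal n) (x : Fin n → ℝ) : ℝ :=
  if t.neg then relu (1 - 2 * x t.var) else relu (2 * x t.var - 1)

/-- The clause gadget
`f_i(x) = σ(z_{i,1} + z_{i,2} + z_{i,3}) − σ(z_{i,1} + z_{i,2} + z_{i,3} − 1)`. -/
noncomputable def clauseGadget {n : ℕ} (C : Fin 3 → Literal n) (x : Fin n → ℝ) : ℝ :=
  relu (∑ j, zval (C j) x) - relu ((∑ j, zval (C j) x) - 1)

/-- The ReLU network associated to a 3-CNF formula:
`f_φ(x) = σ((Σ_{i=1}^m f_i(x)) − m + 1)`. -/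
noncomputable def cnfNet {n m : ℕ} (φ : CNF3 n m) (x : Fin n → ℝ) : ℝ :=
  relu ((∑ i, clauseGadget (φ i) x) - m + 1)


lemma relu_mono {a b : ℝ} (h : a ≤ b) : relu a ≤ relu b :=
  max_le_max h le_rfl

lemma zval_nonneg {n : ℕ} (t : Literal n) (x : Fin n → ℝ) : 0 ≤ zval t x := by
  unfold zval relu; split <;> exact le_max_right _ _

lemma gadget_aux {a b : ℝ} (ha : 0 ≤ a) (hab : a ≤ b) :
    relu a - relu (a - 1) ≤ relu b - relu (b - 1) := by
  simp only [relu, max_def]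
  split_ifs <;> linarith

/-- **rounding lemma.**  For `x ∈ [0,1]^n`, rounding each
coordinate to `1` if `x_k ≥ 1/2` and to `0` otherwise does not decrease the
value of the ReLU network associated to a 3-CNF formula. -/
theorem cnf_net_rounding {n m : ℕ} (φ : CNF3 n m)
    (x x' : Fin n → ℝ) (hx : ∀ k, x k ∈ Set.Icc (0 : ℝ) 1)
    (hx' : ∀ k, x' k = if 1 / 2 ≤ x k then 1 else 0) :
    cnfNet φ x ≤ cnfNet φ x' := by
  have hz : ∀ (t : Literal n), zval t x ≤ zval t x' := by
    intro t
    unfold zval relu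
    have h0 := (hx t.var).1
    have h1 := (hx t.var).2
    have := hx' t.var
    split <;> simp only [max_def] <;> split_ifs at * <;> linarith
  have hg : ∀ i, clauseGadget (φ i) x ≤ clauseGadget (φ i) x' := by
    intro i
    unfold clauseGadget
    apply gadget_aux
    · exact Finset.sum_nonneg fun j _ => zval_nonneg _ _
    · exact Finset.sum_le_sum fun j _ => hz _
  exact relu_mono (by
    have := Finset.sum_le_sum (fun i (_ : i ∈ Finset.univ) => hg i)
    linarith)
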